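/- For every real a ≥ 0, both of the following hold: Φ(a√3) − Φ(a√2) ≤ 0.049 and Φ(a√4) − Φ(a√3) ≤ 0.035. -/

import Mathlib

open MeasureTheory ProbabilityTheory Real

/-- The standard normal cumulative distribution function
`Φ(x) = (1/√(2π)) ∫_{-∞}^{x} e^{-t²/2} dt`. -/
noncomputable def stdGaussianCDF (x : ℝ) : ℝ :=
  (Real.sqrt (2 * Real.pi))⁻¹ * ∫ t in Set.Iic x, Real.exp (-t ^ 2 / 2)

/-!
The tangent line of `-t²/2` at `t = 1` (the extremal intervals lie close to `1`) gives
`Φ(u) - Φ(v) ≤ √e / √(2π) · (e^{-v} - e^{-u})`. If `v = a p`, `u = a q` and `p = r (q - p)`,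
then with `x = e^{-a(q-p)} ∈ (0, 1]` the right-hand difference is `x^r (1 - x)`, whose maximum
`(r/(r+1))^(r+1) / r` follows from weighted AM-GM. For `(p, q) = (√2, √3)` and `(√3, 2)` this
happens with `r = √6 + 2` and `r = 2√3 + 3`, and the constants are then bounded by rational powers.
-/

lemma exp_neg_sq_div_two_le (t : ℝ) : exp (-t ^ 2 / 2) ≤ exp (1 / 2) * exp (-t) := by
  rw [← exp_add, exp_le_exp]
  nlinarith [sq_nonneg (t - 1)]

lemma integrable_exp_neg_sq_div_two : Integrable fun t : ℝ ↦ exp (-t ^ 2 / 2) := by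
  simpa [neg_div, div_eq_inv_mul] using integrable_exp_neg_mul_sq (b := (1 / 2 : ℝ)) (by norm_num)

lemma stdGaussianCDF_sub_le {u v : ℝ} (hvu : v ≤ u) :
    stdGaussianCDF u - stdGaussianCDF v ≤
      exp (1 / 2) / sqrt (2 * π) * (exp (-v) - exp (-u)) := by
  have hbound : ∫ t in v..u, exp (-t ^ 2 / 2) ≤ exp (1 / 2) * (exp (-v) - exp (-u)) :=
    calc ∫ t in v..u, exp (-t ^ 2 / 2)
        ≤ ∫ t in v..u, exp (1 / 2) * exp (-t) :=
          intervalIntegral.integral_mono_on hvu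
            ((by fun_prop : Continuous fun t : ℝ ↦ exp (-t ^ 2 / 2)).intervalIntegrable v u)
            ((by fun_prop : Continuous fun t : ℝ ↦ exp (1 / 2) * exp (-t)).intervalIntegrable v u)
            fun t _ ↦ exp_neg_sq_div_two_le t
      _ = exp (1 / 2) * (exp (-v) - exp (-u)) := by
          rw [intervalIntegral.integral_const_mul, intervalIntegral.integral_comp_neg exp,
            integral_exp]
  rw [stdGaussianCDF, stdGaussianCDF, ← mul_sub, intervalIntegral.integral_Iic_sub_Iic
    integrable_exp_neg_sq_div_two.integrableOn integrable_exp_neg_sq_div_two.integrableOn,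
    div_eq_inv_mul, mul_assoc]
  exact mul_le_mul_of_nonneg_left hbound (by positivity)

/-- `x ↦ x ^ r * (1 - x)` attains its maximum on `[0, 1]` at `x = r / (r + 1)`. -/
lemma rpow_mul_one_sub_le {x r : ℝ} (hx₀ : 0 ≤ x) (hx₁ : x ≤ 1) (hr : 0 < r) :
    x ^ r * (1 - x) ≤ (r / (r + 1)) ^ (r + 1) / r := by
  have hr₁ : 0 < r + 1 := by linarith
  have hy : 0 ≤ r * (1 - x) := mul_nonneg hr.le (by linarith)
  -- weighted AM-GM for `x` and `r * (1 - x)` with weights `r / (r + 1)` and `1 / (r + 1)`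
  have hamgm : x ^ (r / (r + 1)) * (r * (1 - x)) ^ (1 / (r + 1)) ≤ r / (r + 1) := by
    convert geom_mean_le_arith_mean2_weighted (div_pos hr hr₁).le (div_pos one_pos hr₁).le
      hx₀ hy (by field_simp) using 1
    field_simp
    ring
  have hpow := rpow_le_rpow (by positivity) hamgm hr₁.le
  rw [mul_rpow (by positivity) (by positivity), ← rpow_mul hx₀, ← rpow_mul hy,
    div_mul_cancel₀ _ hr₁.ne', one_div_mul_cancel hr₁.ne', rpow_one] at hpow
  rw [le_div_iff₀ hr]
  linarith

lemma exp_neg_mul_sub_exp_neg_mul_le {a p q r : ℝ} (ha : 0 ≤ a) (hpq : p ≤ q) (hr : 0 < r)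
    (hpr : p = r * (q - p)) :
    exp (-(a * p)) - exp (-(a * q)) ≤ (r / (r + 1)) ^ (r + 1) / r := by
  set x := exp (-(a * (q - p)))
  have hx₁ : x ≤ 1 := exp_le_one_iff.2 (by nlinarith)
  have hxr : x ^ r = exp (-(a * p)) := by
    rw [← exp_mul]; congr 1; linear_combination a * hpr
  have hxr₁ : x ^ r * x = exp (-(a * q)) := by
    rw [hxr, ← exp_add]; ring_nf
  calc exp (-(a * p)) - exp (-(a * q)) = x ^ r * (1 - x) := by rw [← hxr₁, hxr]; ring
    _ ≤ _ := rpow_mul_one_sub_le (exp_nonneg _) hx₁ hr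

lemma div_add_one_rpow_div_le {r r₀ s e : ℝ} (hr₀ : 0 < r₀) (hr : r₀ ≤ r) (he : e ≤ r + 1)
    (hs : r / (r + 1) ≤ s) (hs₁ : s ≤ 1) :
    (r / (r + 1)) ^ (r + 1) / r ≤ s ^ e / r₀ := by
  have hr' : 0 < r := hr₀.trans_le hr
  have hs₀ : 0 < s := (div_pos hr' (by linarith)).trans_le hs
  calc (r / (r + 1)) ^ (r + 1) / r ≤ s ^ (r + 1) / r := by gcongr
    _ ≤ s ^ e / r :=
        div_le_div_of_nonneg_right (rpow_le_rpow_of_exponent_ge hs₀ hs₁ he) hr'.le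
    _ ≤ s ^ e / r₀ := by gcongr

lemma rpow_natCast_div_le {x y : ℝ} {m n : ℕ} (hx : 0 ≤ x) (hy : 0 ≤ y) (hn : n ≠ 0)
    (h : x ^ m ≤ y ^ n) : x ^ ((m : ℝ) / n) ≤ y := by
  rw [div_eq_mul_inv, rpow_mul hx, rpow_natCast, ← pow_rpow_inv_natCast hy hn]
  exact rpow_le_rpow (by positivity) h (by positivity)

lemma exp_half_div_sqrt_two_pi_le : exp (1 / 2) / sqrt (2 * π) ≤ 0.6578 := by
  have hexp : exp (1 / 2) ≤ 1.64873 := by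
    have : exp (1 / 2) ^ 2 = exp 1 := by rw [← exp_nat_mul]; norm_num
    nlinarith [exp_pos (1 / 2), exp_one_lt_d9]
  have hsqrt : 2.5066 ≤ sqrt (2 * π) :=
    le_sqrt_of_sq_le (by nlinarith [pi_gt_d6])
  rw [div_le_iff₀ (by positivity)]
  nlinarith

lemma stdGaussianCDF_sub_le_of_exp_neg_sub_le {u v D : ℝ} (hvu : v ≤ u)
    (hD : exp (-v) - exp (-u) ≤ D) :
    stdGaussianCDF u - stdGaussianCDF v ≤ 0.6578 * D :=
  (stdGaussianCDF_sub_le hvu).trans <| mul_le_mul exp_half_div_sqrt_two_pi_le hD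
    (sub_nonneg.2 <| exp_le_exp.2 <| neg_le_neg hvu) (by norm_num)

lemma exp_neg_mul_sqrt_two_sub_exp_neg_mul_sqrt_three_le {a : ℝ} (ha : 0 ≤ a) :
    exp (-(a * √2)) - exp (-(a * √3)) ≤ 0.07449 := by
  have h₆ : √6 = √2 * √3 := by rw [← sqrt_mul (by norm_num)]; norm_num
  have h₂ := sq_sqrt (show (0 : ℝ) ≤ 2 by norm_num)
  have h₃ := sq_sqrt (show (0 : ℝ) ≤ 3 by norm_num)
  have hlo : 2.449 ≤ √6 := le_sqrt_of_sq_le (by norm_num)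
  have hhi : √6 ≤ 2.4495 := (sqrt_le_left (by norm_num)).2 (by norm_num)
  have hpow : (0.8165 : ℝ) ^ ((158 : ℕ) / (29 : ℕ) : ℝ) ≤ 0.3314 :=
    rpow_natCast_div_le (by norm_num) (by norm_num) (by norm_num) (by norm_num)
  calc exp (-(a * √2)) - exp (-(a * √3)) ≤ ((√6 + 2) / (√6 + 2 + 1)) ^ (√6 + 2 + 1) / (√6 + 2) :=
        exp_neg_mul_sub_exp_neg_mul_le ha (sqrt_le_sqrt (by norm_num)) (by positivity)
          (by rw [h₆]; linear_combination (-√2) * h₃ + √3 * h₂)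
    _ ≤ 0.8165 ^ ((158 : ℕ) / (29 : ℕ) : ℝ) / 4.449 :=
        div_add_one_rpow_div_le (by norm_num) (by linarith) (by norm_num; linarith)
          (by rw [div_le_iff₀ (by positivity)]; nlinarith) (by norm_num)
    _ ≤ 0.07449 := by rw [div_le_iff₀ (by norm_num)]; linarith

lemma exp_neg_mul_sqrt_three_sub_exp_neg_mul_sqrt_four_le {a : ℝ} (ha : 0 ≤ a) :
    exp (-(a * √3)) - exp (-(a * √4)) ≤ 0.0532 := by
  have h₄ : √4 = 2 := by rw [show (4 : ℝ) = 2 ^ 2 by norm_num, sqrt_sq zero_le_two]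
  have h₃ := sq_sqrt (show (0 : ℝ) ≤ 3 by norm_num)
  have hlo : 1.732 ≤ √3 := le_sqrt_of_sq_le (by norm_num)
  have hhi : √3 ≤ 1.7321 := (sqrt_le_left (by norm_num)).2 (by norm_num)
  have hpow : (0.86605 : ℝ) ^ ((52 : ℕ) / (7 : ℕ) : ℝ) ≤ 0.3438 :=
    rpow_natCast_div_le (by norm_num) (by norm_num) (by norm_num) (by norm_num)
  rw [h₄]
  calc exp (-(a * √3)) - exp (-(a * 2))
      ≤ ((2 * √3 + 3) / (2 * √3 + 3 + 1)) ^ (2 * √3 + 3 + 1) / (2 * √3 + 3) :=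
        exp_neg_mul_sub_exp_neg_mul_le ha (by linarith) (by positivity)
          (by linear_combination 2 * h₃)
    _ ≤ 0.86605 ^ ((52 : ℕ) / (7 : ℕ) : ℝ) / 6.464 :=
        div_add_one_rpow_div_le (by norm_num) (by linarith) (by norm_num; linarith)
          (by rw [div_le_iff₀ (by positivity)]; nlinarith) (by norm_num)
    _ ≤ 0.0532 := by rw [div_le_iff₀ (by norm_num)]; linarith

theorem stmt19 (a : ℝ) (ha : 0 ≤ a) :
    stdGaussianCDF (a * Real.sqrt 3) - stdGaussianCDF (a * Real.sqrt 2) ≤ 0.049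
      ∧ stdGaussianCDF (a * Real.sqrt 4) - stdGaussianCDF (a * Real.sqrt 3) ≤ 0.035 := by
  have h₂₃ : a * √2 ≤ a * √3 := mul_le_mul_of_nonneg_left (sqrt_le_sqrt (by norm_num)) ha
  have h₃₄ : a * √3 ≤ a * √4 := mul_le_mul_of_nonneg_left (sqrt_le_sqrt (by norm_num)) ha
  constructor
  · calc _ ≤ 0.6578 * 0.07449 := stdGaussianCDF_sub_le_of_exp_neg_sub_le h₂₃
          (exp_neg_mul_sqrt_two_sub_exp_neg_mul_sqrt_three_le ha)
      _ ≤ 0.049 := by norm_num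
  · calc _ ≤ 0.6578 * 0.0532 := stdGaussianCDF_sub_le_of_exp_neg_sub_le h₃₄
          (exp_neg_mul_sqrt_three_sub_exp_neg_mul_sqrt_four_le ha)
      _ ≤ 0.035 := by norm_num
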